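/- Let X be an extremally disconnected compact Hausdorff space. If X admits a κ-metric, then X is discrete (hence finite). -/

import Mathlib

/-- A set is regularly closed if it equals the closure of its interior. -/
def RegClosed {X : Type*} [TopologicalSpace X] (C : Set X) : Prop :=
  C = closure (interior C)

/-- A κ-metric on `X` (Shchepin): a nonnegative function of a point and a regularly
closed set satisfying K1–K4. -/
structure IsKappaMetric {X : Type*} [TopologicalSpace X] (ρ : X → Set X → ℝ) : Prop where
  nonneg : ∀ x C, RegClosed C → 0 ≤ ρ x C
  k1 : ∀ (x : X) (C : Set X), RegClosed C → (ρ x C = 0 ↔ x ∈ C)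
  k2 : ∀ x (C C' : Set X), RegClosed C → RegClosed C' → C ⊆ C' → ρ x C' ≤ ρ x C
  k3 : ∀ C : Set X, RegClosed C → Continuous (fun x => ρ x C)
  k4 : ∀ S : Set (Set X), S.Nonempty → (∀ C ∈ S, RegClosed C) → IsChain (· ⊆ ·) S →
    ∀ x, ρ x (closure (⋃₀ S)) = sInf {r : ℝ | ∃ C ∈ S, r = ρ x C}

lemma regClosed_closure_of_isOpen {X : Type*} [TopologicalSpace X] {O : Set X}
    (h : IsOpen O) : RegClosed (closure O) := by
  unfold RegClosed
  apply subset_antisymm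
  · exact closure_mono (interior_maximal subset_closure h)
  · calc closure (interior (closure O)) ⊆ closure (closure O) :=
        closure_mono interior_subset
      _ = closure O := closure_closure

lemma disjoint_closure_closure_of_ED {X : Type*} [TopologicalSpace X]
    [ExtremallyDisconnected X] {A B : Set X} (hA : IsOpen A) (hB : IsOpen B)
    (h : Disjoint A B) : Disjoint (closure A) (closure B) := by
  have h1 : Disjoint (closure A) B := h.closure_left hB
  have h2 : IsOpen (closure A) := ExtremallyDisconnected.open_closure A hA
  exact h1.closure_right h2

theorem stmt19 {X : Type*} [TopologicalSpace X] [CompactSpace X] [T2Space X]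
    [ExtremallyDisconnected X]
    (ρ : X → Set X → ℝ) (hρ : IsKappaMetric ρ) :
    DiscreteTopology X := by
  by_contra hdisc
  rw [discreteTopology_iff_isOpen_singleton] at hdisc
  push_neg at hdisc
  obtain ⟨x₀, hx₀⟩ := hdisc
  -- Step 1: recursively construct pairwise disjoint nonempty open sets
  have key : ∀ s : Set X, ∃ U : Set X, IsClosed s → x₀ ∉ s →
      IsOpen U ∧ U.Nonempty ∧ Disjoint U s ∧ x₀ ∉ closure U := by
    intro s
    by_cases hs : IsClosed s ∧ x₀ ∉ s
    · obtain ⟨hs1, hs2⟩ := hs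
      have hN : IsOpen sᶜ := hs1.isOpen_compl
      have hxN : x₀ ∈ sᶜ := hs2
      have hy : ∃ y, y ∈ sᶜ ∧ y ≠ x₀ := by
        by_contra hy
        push_neg at hy
        have hss : sᶜ = {x₀} := by
          apply subset_antisymm
          · intro z hz; exact hy z hz
          · intro z hz
            rcases hz with rfl
            exact hxN
        exact hx₀ (hss ▸ hN)
      obtain ⟨y, hyN, hyx⟩ := hy
      obtain ⟨A, B, hAo, hBo, hyA, hxB, hAB⟩ := t2_separation hyx
      refine ⟨A ∩ sᶜ, fun _ _ => ⟨hAo.inter hN, ⟨y, hyA, hyN⟩, ?_, ?_⟩⟩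
      · exact Set.disjoint_left.mpr fun z hz => hz.2
      · intro hcl
        obtain ⟨z, hzB, hzA, _⟩ := mem_closure_iff.mp hcl B hBo hxB
        exact Set.disjoint_left.mp hAB hzA hzB
    · exact ⟨∅, fun h1 h2 => absurd ⟨h1, h2⟩ hs⟩
  choose F hF using key
  let Sst : ℕ → Set X := fun n =>
    Nat.rec (motive := fun _ => Set X) ∅ (fun _ s => s ∪ closure (F s)) n
  have hSrec : ∀ n, Sst (n + 1) = Sst n ∪ closure (F (Sst n)) := fun n => rfl
  have hinv : ∀ n, IsClosed (Sst n) ∧ x₀ ∉ Sst n := by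
    intro n
    induction n with
    | zero => exact ⟨isClosed_empty, Set.notMem_empty _⟩
    | succ n ih =>
      obtain ⟨ih1, ih2⟩ := ih
      have hp := hF (Sst n) ih1 ih2
      rw [hSrec]
      exact ⟨ih1.union isClosed_closure, by
        intro hmem
        rcases hmem with h | h
        · exact ih2 h
        · exact hp.2.2.2 h⟩
  let U : ℕ → Set X := fun n => F (Sst n)
  have hprops : ∀ n, IsOpen (U n) ∧ (U n).Nonempty ∧ Disjoint (U n) (Sst n) ∧
      x₀ ∉ closure (U n) := fun n => hF (Sst n) (hinv n).1 (hinv n).2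
  have hUo : ∀ n, IsOpen (U n) := fun n => (hprops n).1
  have hUne : ∀ n, (U n).Nonempty := fun n => (hprops n).2.1
  have hSmono : ∀ n m, n ≤ m → Sst n ⊆ Sst m := by
    intro n m hnm
    induction m with
    | zero => rw [Nat.le_zero] at hnm; subst hnm; exact subset_rfl
    | succ m ih =>
      rcases Nat.lt_or_ge n (m + 1) with h | h
      · have := ih (Nat.lt_succ_iff.mp h)
        rw [hSrec]
        exact this.trans Set.subset_union_left
      · have : n = m + 1 := le_antisymm hnm h
        subst this; exact subset_rfl
  have hclU_sub : ∀ n, closure (U n) ⊆ Sst (n + 1) := by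
    intro n; rw [hSrec]; exact Set.subset_union_right
  have hUdisj : ∀ i j, i ≠ j → Disjoint (U i) (U j) := by
    have hlt : ∀ i j, i < j → Disjoint (U i) (U j) := by
      intro i j hij
      have h1 : U i ⊆ Sst j := (subset_closure.trans (hclU_sub i)).trans (hSmono _ _ hij)
      exact (Set.disjoint_of_subset_right h1 (hprops j).2.2.1).symm
    intro i j hij
    rcases Nat.lt_or_ge i j with h | h
    · exact hlt i j h
    · exact (hlt j i (lt_of_le_of_ne h (Ne.symm hij))).symm
  -- Step 2: pick x in closure of the union but in no closure (U n)
  have hxex : ∃ x, x ∈ closure (⋃ n, U n) ∧ ∀ n, x ∉ closure (U n) := by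
    by_contra hc
    push_neg at hc
    have hcov : closure (⋃ n, U n) ⊆ ⋃ n, closure (U n) := by
      intro z hz
      obtain ⟨n, hn⟩ := hc z hz
      exact Set.mem_iUnion.mpr ⟨n, hn⟩
    have hK : IsCompact (closure (⋃ n, U n)) := isClosed_closure.isCompact
    obtain ⟨t, ht⟩ := hK.elim_finite_subcover (fun n => closure (U n))
      (fun n => ExtremallyDisconnected.open_closure _ (hUo n)) hcov
    set m := t.sup id + 1 with hm
    have hmt : m ∉ t := by
      intro hmem
      have := Finset.le_sup (f := id) hmem
      simp only [id] at this
      omega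
    obtain ⟨z, hz⟩ := hUne m
    have hzK : z ∈ ⋃ n ∈ t, closure (U n) :=
      ht (subset_closure (Set.mem_iUnion.mpr ⟨m, hz⟩))
    obtain ⟨n, hnt, hzn⟩ := Set.mem_iUnion₂.mp hzK
    have hnm : m ≠ n := fun h => hmt (h ▸ hnt)
    have : Disjoint (U m) (closure (U n)) :=
      ((hUdisj m n hnm).closure_right (hUo m))
    exact Set.disjoint_left.mp this hz hzn
  obtain ⟨x, hxcl, hxn⟩ := hxex
  -- Step 3: the κ-metric machinery
  set V : Set ℕ → Set X := fun M => closure (⋃ n ∈ M, U n) with hV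
  have hVreg : ∀ M, RegClosed (V M) :=
    fun M => regClosed_closure_of_isOpen (isOpen_biUnion fun n _ => hUo n)
  have hVmono : ∀ {M M' : Set ℕ}, M ⊆ M' → V M ⊆ V M' := by
    intro M M' h
    exact closure_mono (Set.biUnion_subset_biUnion_left h)
  have hVdisj : ∀ M M' : Set ℕ, Disjoint M M' → Disjoint (V M) (V M') := by
    intro M M' h
    apply disjoint_closure_closure_of_ED (isOpen_biUnion fun n _ => hUo n)
      (isOpen_biUnion fun n _ => hUo n)
    rw [Set.disjoint_left]
    rintro z hz hz'
    obtain ⟨n, hn, hzn⟩ := Set.mem_iUnion₂.mp hz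
    obtain ⟨n', hn', hzn'⟩ := Set.mem_iUnion₂.mp hz'
    have hne : n ≠ n' := fun he => Set.disjoint_left.mp h hn (he ▸ hn')
    exact Set.disjoint_left.mp (hUdisj n n' hne) hzn hzn'
  have hVfin : ∀ I : Finset ℕ, x ∉ V (↑I : Set ℕ) := by
    intro I hmem
    have hsub : V (↑I : Set ℕ) ⊆ ⋃ n ∈ I, closure (U n) := by
      apply closure_minimal
      · exact Set.iUnion₂_mono fun n _ => subset_closure
      · exact (I.finite_toSet.isClosed_biUnion fun n _ => isClosed_closure)
    obtain ⟨n, _, hn⟩ := Set.mem_iUnion₂.mp (hsub hmem)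
    exact hxn n hn
  have hcover : ∀ M : Set ℕ, x ∈ V M ∪ V Mᶜ := by
    intro M
    have : (⋃ n, U n) = (⋃ n ∈ M, U n) ∪ (⋃ n ∈ Mᶜ, U n) := by
      ext z
      simp only [Set.mem_iUnion, Set.mem_union, Set.mem_compl_iff]
      constructor
      · rintro ⟨n, hn⟩
        by_cases h : n ∈ M
        · exact Or.inl ⟨n, h, hn⟩
        · exact Or.inr ⟨n, h, hn⟩
      · rintro (⟨n, _, hn⟩ | ⟨n, _, hn⟩) <;> exact ⟨n, hn⟩
    have hxcl' : x ∈ closure ((⋃ n ∈ M, U n) ∪ ⋃ n ∈ Mᶜ, U n) := by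
      rw [← this]; exact hxcl
    rw [closure_union] at hxcl'
    exact hxcl'
  -- K4 : reduce to finite truncations
  have hInf : ∀ M : Set ℕ,
      ρ x (V M) = sInf {r : ℝ | ∃ k : ℕ, r = ρ x (V (M ∩ Set.Iic k))} := by
    intro M
    have htrunc : ∀ k k' : ℕ, k ≤ k' → V (M ∩ Set.Iic k) ⊆ V (M ∩ Set.Iic k') :=
      fun k k' h => hVmono (Set.inter_subset_inter_right M (Set.Iic_subset_Iic.mpr
        (Nat.cast_le.mpr h)))
    have h4 := hρ.k4 (Set.range fun k : ℕ => V (M ∩ Set.Iic k))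
      ⟨_, ⟨0, rfl⟩⟩
      (by rintro C ⟨k, rfl⟩; exact hVreg _)
      (by
        rintro C ⟨k, rfl⟩ C' ⟨k', rfl⟩ _
        rcases le_total k k' with h | h
        · exact Or.inl (htrunc k k' h)
        · exact Or.inr (htrunc k' k h)) x
    have hUnion : closure (⋃₀ Set.range fun k : ℕ => V (M ∩ Set.Iic k)) = V M := by
      rw [Set.sUnion_range]
      apply subset_antisymm
      · apply closure_minimal _ isClosed_closure
        apply Set.iUnion_subset
        intro k
        exact hVmono Set.inter_subset_left
      · apply closure_mono
        intro z hz
        obtain ⟨n, hn, hzn⟩ := Set.mem_iUnion₂.mp hz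
        apply Set.mem_iUnion.mpr ⟨n, _⟩
        exact subset_closure (Set.mem_iUnion₂.mpr ⟨n, ⟨hn, Set.mem_Iic.mpr le_rfl⟩, hzn⟩)
    rw [hUnion] at h4
    rw [h4]
    congr 1
    ext r
    simp only [Set.mem_setOf_eq, Set.mem_range]
    constructor
    · rintro ⟨C, ⟨k, rfl⟩, rfl⟩; exact ⟨k, rfl⟩
    · rintro ⟨k, rfl⟩; exact ⟨_, ⟨k, rfl⟩, rfl⟩
  have hbdd : ∀ M : Set ℕ, BddBelow {r : ℝ | ∃ k : ℕ, r = ρ x (V (M ∩ Set.Iic k))} := by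
    intro M
    refine ⟨0, ?_⟩
    rintro r ⟨k, rfl⟩
    exact hρ.nonneg x _ (hVreg _)
  have hne' : ∀ M : Set ℕ, {r : ℝ | ∃ k : ℕ, r = ρ x (V (M ∩ Set.Iic k))}.Nonempty :=
    fun M => ⟨_, ⟨0, rfl⟩⟩
  have hmem_iff : ∀ M : Set ℕ, x ∈ V M ↔
      ∀ j : ℕ, ∃ k : ℕ, ρ x (V (M ∩ Set.Iic k)) < 1 / ((j : ℝ) + 1) := by
    intro M
    constructor
    · intro hx j
      have h0 : ρ x (V M) = 0 := (hρ.k1 x (V M) (hVreg M)).mpr hx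
      have hsinf : sInf {r : ℝ | ∃ k : ℕ, r = ρ x (V (M ∩ Set.Iic k))} = 0 := by
        rw [← hInf M]; exact h0
      have hpos : (0 : ℝ) < 1 / ((j : ℝ) + 1) := by positivity
      have hlt : sInf {r : ℝ | ∃ k : ℕ, r = ρ x (V (M ∩ Set.Iic k))} < 1 / ((j : ℝ) + 1) := by
        rw [hsinf]; exact hpos
      obtain ⟨b, ⟨k, rfl⟩, hb⟩ := (csInf_lt_iff (hbdd M) (hne' M)).mp hlt
      exact ⟨k, hb⟩
    · intro h
      have h1 : ρ x (V M) ≤ 0 := by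
        rw [hInf M]
        by_contra hc
        push_neg at hc
        obtain ⟨j, hj⟩ := exists_nat_one_div_lt hc
        obtain ⟨k, hk⟩ := h j
        have hle : sInf {r : ℝ | ∃ k : ℕ, r = ρ x (V (M ∩ Set.Iic k))} ≤
            ρ x (V (M ∩ Set.Iic k)) := csInf_le (hbdd M) ⟨k, rfl⟩
        linarith
      have h2 : 0 ≤ ρ x (V M) := hρ.nonneg x _ (hVreg M)
      exact (hρ.k1 x (V M) (hVreg M)).mp (le_antisymm h1 h2)
  -- Step 4: Baire category argument in ℕ → Bool
  set O : ℕ → Set (ℕ → Bool) := fun j =>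
    ⋃ k : ℕ, {f : ℕ → Bool | ρ x (V ({n | f n = true} ∩ Set.Iic k)) < 1 / ((j : ℝ) + 1)}
    with hO
  set P : ℕ → Set (ℕ → Bool) := fun j =>
    ⋃ k : ℕ, {f : ℕ → Bool | ρ x (V ({n | f n = false} ∩ Set.Iic k)) < 1 / ((j : ℝ) + 1)}
    with hP
  have hbasic_open : ∀ (b : Bool) (k j : ℕ),
      IsOpen {f : ℕ → Bool | ρ x (V ({n | f n = b} ∩ Set.Iic k)) < 1 / ((j : ℝ) + 1)} := by
    intro b k j
    rw [isOpen_iff_mem_nhds]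
    intro f hf
    rw [mem_nhds_iff]
    refine ⟨Set.pi (Set.Iic k) (fun n => {f n}), ?_, ?_, ?_⟩
    · intro g hg
      have hsets : {n | g n = b} ∩ Set.Iic k = {n | f n = b} ∩ Set.Iic k := by
        ext n
        simp only [Set.mem_inter_iff, Set.mem_setOf_eq, Set.mem_Iic]
        constructor
        · rintro ⟨h1, h2⟩
          have := hg n h2
          simp only [Set.mem_singleton_iff] at this
          exact ⟨this ▸ h1, h2⟩
        · rintro ⟨h1, h2⟩
          have := hg n h2
          simp only [Set.mem_singleton_iff] at this
          exact ⟨this ▸ h1, h2⟩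
      simp only [Set.mem_setOf_eq] at hf ⊢
      rw [hsets]
      exact hf
    · exact isOpen_set_pi (Set.finite_Iic k) (fun n _ => isOpen_discrete _)
    · intro n _
      rfl
  have hOopen : ∀ j, IsOpen (O j) := fun j => isOpen_iUnion fun k => hbasic_open true k j
  have hPopen : ∀ j, IsOpen (P j) := fun j => isOpen_iUnion fun k => hbasic_open false k j
  have hD1 : ∀ f : ℕ → Bool, (f ∈ ⋂ j : ℕ, O j) ↔ x ∈ V {n | f n = true} := by
    intro f
    rw [Set.mem_iInter]
    rw [hmem_iff]
    simp only [hO, Set.mem_iUnion, Set.mem_setOf_eq]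
  have hD2 : ∀ f : ℕ → Bool, (f ∈ ⋂ j : ℕ, P j) ↔ x ∈ V {n | f n = false} := by
    intro f
    rw [Set.mem_iInter]
    rw [hmem_iff]
    simp only [hP, Set.mem_iUnion, Set.mem_setOf_eq]
  -- density
  have hdense : ∀ b : Bool, Dense {f : ℕ → Bool | x ∈ V {n | f n = b}} := by
    intro b
    rw [dense_iff_inter_open]
    rintro W hW ⟨f₀, hf₀⟩
    obtain ⟨I, u, hu, hsub⟩ := isOpen_pi_iff.mp hW f₀ hf₀
    set g : ℕ → Bool := fun n => if n ∈ I then f₀ n else b with hg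
    have hgW : g ∈ W := by
      apply hsub
      intro n hn
      have hn' : n ∈ I := Finset.mem_coe.mp hn
      simp only [hg]
      rw [if_pos hn']
      exact (hu n (Finset.mem_coe.mp hn)).2
    have hcompl : {n | g n = b}ᶜ ⊆ (↑I : Set ℕ) := by
      intro n hn
      by_contra hnI
      have hnI' : n ∉ I := fun h => hnI (Finset.mem_coe.mpr h)
      apply hn
      simp only [Set.mem_setOf_eq, hg]
      rw [if_neg hnI']
    have hxg : x ∈ V {n | g n = b} := by
      rcases (Set.mem_union _ _ _).mp (hcover {n | g n = b}) with h | h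
      · exact h
      · exact absurd (hVmono hcompl h) (hVfin I)
    exact ⟨g, hgW, hxg⟩
  have hOdense : ∀ j, Dense (O j) := by
    intro j
    apply Dense.mono _ (hdense true)
    intro f hf
    have : f ∈ ⋂ j : ℕ, O j := (hD1 f).mpr hf
    exact Set.mem_iInter.mp this j
  have hPdense : ∀ j, Dense (P j) := by
    intro j
    apply Dense.mono _ (hdense false)
    intro f hf
    have : f ∈ ⋂ j : ℕ, P j := (hD2 f).mpr hf
    exact Set.mem_iInter.mp this j
  have hDense : Dense (⋂ j : ℕ, (O j ∩ P j)) := by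
    apply dense_iInter_of_isOpen
    · intro j; exact (hOopen j).inter (hPopen j)
    · intro j; exact Dense.inter_of_isOpen_left (hOdense j) (hPdense j) (hOopen j)
  obtain ⟨f, hf⟩ := hDense.nonempty
  have hf1 : x ∈ V {n | f n = true} := by
    apply (hD1 f).mp
    rw [Set.mem_iInter]
    intro j
    exact (Set.mem_iInter.mp hf j).1
  have hf2 : x ∈ V {n | f n = false} := by
    apply (hD2 f).mp
    rw [Set.mem_iInter]
    intro j
    exact (Set.mem_iInter.mp hf j).2
  have hdisjM : Disjoint {n | f n = true} {n | f n = false} := by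
    rw [Set.disjoint_left]
    intro n h1 h2
    simp only [Set.mem_setOf_eq] at h1 h2
    rw [h1] at h2
    exact Bool.noConfusion h2
  exact Set.disjoint_left.mp (hVdisj _ _ hdisjM) hf1 hf2
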